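/- Let τ, δ be real numbers with 0 < δ ≤ τ, and define K₊(α) = sin(πδα)·sin(π(2τ+δ)α)/(π²δα²) for α ≠ 0 (extended continuously at α = 0). Then for every real number t, one has U_τ(t) ≤ ∫_{-∞}^{∞} e(αt) K₊(α) dα ≤ U_{τ+δ}(t). -/

import Mathlib

/-!
With the tent `Λ_a(x) = max (a - |x|) 0`, whose Fourier transform is `sin² (π a α) / (π² α²)`,
the kernel `K₊` is the Fourier transform of the trapezoid `T = (Λ_{τ+δ} - Λ_τ) / δ`, because
`sin² (π (τ+δ) α) - sin² (π τ α) = sin (π δ α) sin (π (2τ+δ) α)`. Both `T` and `K₊` are continuous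
and integrable, so Fourier inversion turns the integral into `T t`; and `T` is `1` on `[-τ, τ]`,
vanishes outside `(-(τ+δ), τ+δ)` and takes values in `[0, 1]`.
-/

open Real MeasureTheory Set FourierTransform

noncomputable def tent (a x : ℝ) : ℝ := max (a - |x|) 0

@[fun_prop]
lemma continuous_tent (a : ℝ) : Continuous (tent a) := by
  unfold tent; fun_prop

lemma tent_of_le_abs {a x : ℝ} (h : a ≤ |x|) : tent a x = 0 :=
  max_eq_right (by linarith)

lemma tent_of_abs_le {a x : ℝ} (h : |x| ≤ a) : tent a x = a - |x| :=
  max_eq_left (by linarith)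

lemma support_tent_subset (a : ℝ) : Function.support (tent a) ⊆ Ioo (-a) a := by
  intro x hx
  by_contra h
  exact hx (tent_of_le_abs (by rw [mem_Ioo, ← abs_lt] at h; linarith))

lemma integrable_tent (a : ℝ) : Integrable fun x => (tent a x : ℂ) :=
  (Continuous.integrable_of_hasCompactSupport (by fun_prop)
    (HasCompactSupport.intro (isCompact_Icc (a := -a) (b := a)) fun x hx => by
      rw [mem_Icc, ← abs_le, not_le] at hx
      rw [tent_of_le_abs hx.le, Complex.ofReal_zero]))

lemma integral_affine_mul_cexp {c : ℂ} (hc : c ≠ 0) (p q : ℂ) (u v : ℝ) :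
    ∫ x in u..v, (p + q * x) * Complex.exp (c * x) =
      ((p + q * v) / c - q / c ^ 2) * Complex.exp (c * v) -
        ((p + q * u) / c - q / c ^ 2) * Complex.exp (c * u) := by
  refine intervalIntegral.integral_eq_sub_of_hasDerivAt
    (f := fun x : ℝ => ((p + q * x) / c - q / c ^ 2) * Complex.exp (c * x)) (fun x _ => ?_) ?_
  · have h₁ : HasDerivAt (fun z : ℂ => (p + q * z) / c - q / c ^ 2) (q * 1 / c) x :=
      (((hasDerivAt_id' _).const_mul q).const_add p).div_const c |>.sub_const _
    have h₂ : HasDerivAt (fun z : ℂ => Complex.exp (c * z)) (Complex.exp (c * x) * (c * 1)) x :=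
      ((hasDerivAt_id' _).const_mul c).cexp
    refine ((h₁.mul h₂).congr_deriv ?_).comp_ofReal
    field_simp
    ring
  · exact Continuous.intervalIntegrable (by fun_prop) u v

lemma integral_tent_mul_cexp {a : ℝ} (ha : 0 ≤ a) {c : ℂ} (hc : c ≠ 0) :
    ∫ x, (tent a x : ℂ) * Complex.exp (c * x) = 2 * (Complex.cosh (c * a) - 1) / c ^ 2 := by
  have hsupp : Function.support (fun x => (tent a x : ℂ) * Complex.exp (c * x)) ⊆ Ioc (-a) a :=
    fun x hx => Ioo_subset_Ioc_self <| support_tent_subset a <| by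
      simpa using (Function.support_mul_subset_left _ _ hx)
  have hint : ∀ u v : ℝ, IntervalIntegrable (fun x => (tent a x : ℂ) * Complex.exp (c * x))
      volume u v := fun u v => Continuous.intervalIntegrable (by fun_prop) u v
  have hleft : ∫ x in -a..0, (tent a x : ℂ) * Complex.exp (c * x) =
      ∫ x in -a..0, ((a : ℂ) + 1 * x) * Complex.exp (c * x) := by
    refine intervalIntegral.integral_congr fun x hx => ?_
    rw [uIcc_of_le (by linarith)] at hx
    rw [tent_of_abs_le (by rw [abs_le]; constructor <;> linarith [hx.1, hx.2]),
      abs_of_nonpos hx.2]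
    push_cast; ring
  have hright : ∫ x in (0 : ℝ)..a, (tent a x : ℂ) * Complex.exp (c * x) =
      ∫ x in (0 : ℝ)..a, ((a : ℂ) + -1 * x) * Complex.exp (c * x) := by
    refine intervalIntegral.integral_congr fun x hx => ?_
    rw [uIcc_of_le ha] at hx
    rw [tent_of_abs_le (by rw [abs_le]; constructor <;> linarith [hx.1, hx.2]),
      abs_of_nonneg hx.1]
    push_cast; ring
  rw [← intervalIntegral.integral_eq_integral_of_support_subset hsupp,
    ← intervalIntegral.integral_add_adjacent_intervals (hint _ 0) (hint 0 _), hleft, hright,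
    integral_affine_mul_cexp hc, integral_affine_mul_cexp hc, Complex.cosh]
  push_cast
  simp only [mul_zero, Complex.exp_zero, mul_neg]
  field_simp
  ring

lemma fourier_tent {a : ℝ} (ha : 0 ≤ a) {α : ℝ} (hα : α ≠ 0) :
    𝓕 (fun x => (tent a x : ℂ)) α = ((sin (π * a * α) ^ 2 / (π ^ 2 * α ^ 2) : ℝ) : ℂ) := by
  set c : ℂ := ((-2 * π * α : ℝ) : ℂ) * Complex.I
  have hc : c ≠ 0 := by simp [c, hα, pi_ne_zero]
  have hcos : cos (-2 * π * α * a) = 1 - 2 * sin (π * a * α) ^ 2 := by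
    rw [show -2 * π * α * a = -(2 * (π * a * α)) by ring, cos_neg, cos_two_mul_eq_one_sub]
  calc 𝓕 (fun x => (tent a x : ℂ)) α = ∫ x, (tent a x : ℂ) * Complex.exp (c * x) := by
        rw [fourier_real_eq_integral_exp_smul]
        congr 1 with x
        rw [smul_eq_mul, mul_comm]
        congr 2
        simp only [c]
        push_cast
        ring
    _ = 2 * (Complex.cosh (c * a) - 1) / c ^ 2 := integral_tent_mul_cexp ha hc
    _ = _ := by
        rw [show c * a = ((-2 * π * α * a : ℝ) : ℂ) * Complex.I by simp only [c]; push_cast; ring,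
          Complex.cosh_mul_I, ← Complex.ofReal_cos, hcos]
        simp only [c, mul_pow, Complex.I_sq]
        push_cast
        field_simp
        ring

lemma sin_sq_sub_sin_sq (x y : ℝ) : sin x ^ 2 - sin y ^ 2 = sin (x - y) * sin (x + y) := by
  rw [sin_sub, sin_add]
  linear_combination sin y ^ 2 * sin_sq_add_cos_sq x - sin x ^ 2 * sin_sq_add_cos_sq y

lemma fourier_sub_div {f g : ℝ → ℂ} (hf : Integrable f) (hg : Integrable g) (d : ℂ) (w : ℝ) :
    𝓕 (fun x => (f x - g x) / d) w = (𝓕 f w - 𝓕 g w) / d := by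
  simp only [fourier_real_eq, ← smul_div_assoc, smul_sub]
  rw [integral_div, integral_sub]
  all_goals
    simpa only [RCLike.inner_apply, conj_trivial, mul_comm w]
      using (Real.fourierIntegral_convergent_iff w).2 ‹_›

noncomputable def trapezoid (τ δ x : ℝ) : ℝ := (tent (τ + δ) x - tent τ x) / δ

lemma ofReal_trapezoid (τ δ x : ℝ) :
    (trapezoid τ δ x : ℂ) = ((tent (τ + δ) x : ℂ) - tent τ x) / δ := by
  push_cast [trapezoid]
  rfl

lemma integrable_trapezoid (τ δ : ℝ) : Integrable fun x => (trapezoid τ δ x : ℂ) := by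
  simp_rw [ofReal_trapezoid]
  exact ((integrable_tent _).sub (integrable_tent _)).div_const _

lemma fourier_trapezoid {τ δ α : ℝ} (hτ : 0 ≤ τ) (hδ : 0 < δ) (hα : α ≠ 0) :
    𝓕 (fun x => (trapezoid τ δ x : ℂ)) α =
      ((sin (π * δ * α) * sin (π * (2 * τ + δ) * α) / (π ^ 2 * δ * α ^ 2) : ℝ) : ℂ) := by
  simp_rw [ofReal_trapezoid]
  rw [fourier_sub_div (integrable_tent _) (integrable_tent _), fourier_tent (by linarith) hα,
    fourier_tent hτ hα, ← Complex.ofReal_sub, ← Complex.ofReal_div]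
  congr 1
  rw [← sub_div, sin_sq_sub_sin_sq, show π * (τ + δ) * α - π * τ * α = π * δ * α by ring,
    show π * (τ + δ) * α + π * τ * α = π * (2 * τ + δ) * α by ring]
  field_simp

lemma tent_le_tent_add {δ : ℝ} (hδ : 0 ≤ δ) (a x : ℝ) : tent a x ≤ tent (a + δ) x :=
  max_le_max (by linarith) le_rfl

lemma tent_add_le {δ : ℝ} (hδ : 0 ≤ δ) (a x : ℝ) : tent (a + δ) x ≤ tent a x + δ := by
  unfold tent
  exact max_le (by linarith [le_max_left (a - |x|) 0]) (by linarith [le_max_right (a - |x|) 0])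

lemma indicator_Ioo_le_trapezoid {τ δ : ℝ} (hδ : 0 < δ) (t : ℝ) :
    (Ioo (-τ) τ).indicator (fun _ => (1 : ℝ)) t ≤ trapezoid τ δ t := by
  by_cases ht : t ∈ Ioo (-τ) τ
  · have h : |t| ≤ τ := (abs_lt.2 ht).le
    rw [indicator_of_mem ht, trapezoid, tent_of_abs_le h, tent_of_abs_le (by linarith),
      le_div_iff₀ hδ]
    linarith
  · rw [indicator_of_notMem ht]
    exact div_nonneg (sub_nonneg.2 (tent_le_tent_add hδ.le τ t)) hδ.le

lemma trapezoid_le_indicator_Ioo {τ δ : ℝ} (hδ : 0 < δ) (t : ℝ) :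
    trapezoid τ δ t ≤ (Ioo (-(τ + δ)) (τ + δ)).indicator (fun _ => (1 : ℝ)) t := by
  by_cases ht : t ∈ Ioo (-(τ + δ)) (τ + δ)
  · rw [indicator_of_mem ht, trapezoid, div_le_one hδ]
    linarith [tent_add_le hδ.le τ t]
  · have h : τ + δ ≤ |t| := by rwa [mem_Ioo, ← abs_lt, not_lt] at ht
    rw [indicator_of_notMem ht, trapezoid, tent_of_le_abs h, tent_of_le_abs (by linarith)]
    simp

lemma integrable_sin_mul_sin_div_sq (a b : ℝ) :
    Integrable fun x : ℝ => sin (a * x) * sin (b * x) / x ^ 2 := by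
  refine (integrable_inv_one_add_sq.const_mul (|a * b| + 1)).mono'
    (by fun_prop : Measurable _).aestronglyMeasurable (ae_of_all _ fun x => ?_)
  rcases eq_or_ne x 0 with rfl | hx
  · rw [zero_pow two_ne_zero, div_zero, norm_zero]
    positivity
  have hx2 : 0 < x ^ 2 := by positivity
  have hsmall : |sin (a * x) * sin (b * x)| ≤ |a * b| * x ^ 2 := by
    rw [abs_mul, abs_mul, ← sq_abs x]
    calc |sin (a * x)| * |sin (b * x)| ≤ |a * x| * |b * x| :=
          mul_le_mul abs_sin_le_abs abs_sin_le_abs (abs_nonneg _) (abs_nonneg _)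
      _ = |a| * |b| * |x| ^ 2 := by rw [abs_mul, abs_mul]; ring
  have hone : |sin (a * x) * sin (b * x)| ≤ 1 := by
    rw [abs_mul]
    exact mul_le_one₀ (abs_sin_le_one _) (abs_nonneg _) (abs_sin_le_one _)
  rw [Real.norm_eq_abs, abs_div, abs_of_pos hx2, le_mul_inv_iff₀ (by positivity),
    div_mul_eq_mul_div, mul_add, mul_one, add_div, mul_div_cancel_right₀ _ hx2.ne']
  exact add_le_add ((div_le_iff₀ hx2).2 hsmall) hone

lemma integral_cexp_mul_fourier {g : ℝ → ℂ} (hg : Continuous g) (hgi : Integrable g)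
    (hFi : Integrable (𝓕 g)) (t : ℝ) :
    ∫ α : ℝ, Complex.exp (2 * π * Complex.I * α * t) * 𝓕 g α = g t := by
  rw [← congrFun (hg.fourierInv_fourier_eq hgi hFi) t, fourierInv_eq']
  congr 1 with α
  simp only [RCLike.inner_apply, conj_trivial, smul_eq_mul]
  push_cast
  ring_nf

theorem stmt_1 (τ δ : ℝ) (hδ : 0 < δ) (hδτ : δ ≤ τ)
    (Kp : ℝ → ℝ) (hKcont : Continuous Kp)
    (hKp : ∀ α : ℝ, α ≠ 0 →
      Kp α = Real.sin (π * δ * α) * Real.sin (π * (2 * τ + δ) * α) / (π ^ 2 * δ * α ^ 2))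
    (t : ℝ) :
    Set.indicator (Set.Ioo (-τ) τ) (fun _ => (1 : ℝ)) t ≤
      (∫ α : ℝ, Complex.exp (2 * π * Complex.I * α * t) * (Kp α : ℂ)).re ∧
    (∫ α : ℝ, Complex.exp (2 * π * Complex.I * α * t) * (Kp α : ℂ)).re ≤
      Set.indicator (Set.Ioo (-(τ + δ)) (τ + δ)) (fun _ => (1 : ℝ)) t := by
  have hτ : 0 ≤ τ := hδ.le.trans hδτ
  have hFT : 𝓕 (fun x => (trapezoid τ δ x : ℂ)) = fun α => (Kp α : ℂ) :=
    Continuous.ext_on (dense_compl_singleton 0)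
      (VectorFourier.fourierIntegral_continuous Real.continuous_fourierChar
        (innerSL ℝ).continuous₂ (integrable_trapezoid τ δ)) (by fun_prop)
      fun α hα => by rw [fourier_trapezoid hτ hδ hα, hKp α hα]
  have hKi : Integrable Kp := by
    refine ((integrable_sin_mul_sin_div_sq (π * δ) (π * (2 * τ + δ))).const_mul
      (π ^ 2 * δ)⁻¹).congr ?_
    filter_upwards [Measure.ae_ne volume 0] with α hα
    rw [hKp α hα]
    field_simp
  have hinv := integral_cexp_mul_fourier (by unfold trapezoid; fun_prop) (integrable_trapezoid τ δ)
    (hFT ▸ hKi.ofReal) t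
  rw [hFT] at hinv
  rw [hinv, Complex.ofReal_re]
  exact ⟨indicator_Ioo_le_trapezoid hδ t, trapezoid_le_indicator_Ioo hδ t⟩
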